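/- arXiv:1303.6020 — 3 statements merged into one kernel-verified Lean document; each statement's English description precedes it below -/
import Mathlib

section
/- Let A be a q-ary additive (w,d)-disjunct t×n matrix with w ≤ (q−1)/d, and suppose A contains d+2 rows R_1, ..., R_{d+2} that are pairwise disjoint (no two have a common nonzero coordinate) and have all entries in {0,1}. Let A' be obtained from A by deleting row R_{d+2} and replacing each row R_k (1 ≤ k ≤ d+1) with R'_k = (wd+1)·R_k + R_{d+2}. Then A' is a q-ary additive (w,d)-disjunct matrix of size (t−1)×n. -/
/-- Additive `(w,d)`-disjunct matrix with rows indexed by an arbitrary type. -/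
def AddDisjunct {ι : Type*} {n : ℕ} (M : ι → Fin n → ℝ) (w : ℝ) (d : ℕ) : Prop :=
  ∀ S : Finset (Fin n), S.card ≤ d → ∀ k ∉ S, ∃ i, M i k > w * ∑ j ∈ S, M i j

/-- Entries of `M` belong to `{0,1,...,q-1}`. -/
def QaryEntries {ι : Type*} {n : ℕ} (M : ι → Fin n → ℝ) (q : ℕ) : Prop :=
  ∀ i j, ∃ a : ℕ, a < q ∧ M i j = a

/-- Theorem `wd`: deleting a row from a `q`-ary additive
`(w,d)`-disjunct matrix with `d+2` pairwise disjoint binary rows.  The rows of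
`A` are indexed by `Fin (d+2) ⊕ Fin t'` (so `t = d + 2 + t'`), the special
rows `R_1,…,R_{d+2}` being those indexed by `Fin (d+2)`; the rows of `A'` are
indexed by `Fin (d+1) ⊕ Fin t'` (so `A'` has `t - 1` rows). -/
theorem row_deletion (q t' n d : ℕ) (w : ℕ) (hwpos : 0 < w)
    (hq : w * d + 2 ≤ q)
    (A : (Fin (d + 2) ⊕ Fin t') → Fin n → ℝ)
    (hAq : QaryEntries A q)
    (hwbound : (w : ℝ) ≤ ((q : ℝ) - 1) / d)
    (hdisj : AddDisjunct A (w : ℝ) d)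
    (hbinary : ∀ k : Fin (d + 2), ∀ j, A (Sum.inl k) j = 0 ∨ A (Sum.inl k) j = 1)
    (hdisjoint : ∀ k k' : Fin (d + 2), k ≠ k' →
      ∀ j, A (Sum.inl k) j = 0 ∨ A (Sum.inl k') j = 0)
    (A' : (Fin (d + 1) ⊕ Fin t') → Fin n → ℝ)
    (hA' : ∀ k : Fin (d + 1), ∀ j,
      A' (Sum.inl k) j = ((w : ℝ) * d + 1) * A (Sum.inl k.castSucc) j
        + A (Sum.inl (Fin.last (d + 1))) j)
    (hA'' : ∀ i : Fin t', ∀ j, A' (Sum.inr i) j = A (Sum.inr i) j) :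
    QaryEntries A' q ∧ AddDisjunct A' (w : ℝ) d := by

  have hw1 : (1:ℝ) ≤ w := by exact_mod_cast hwpos
  have hwnn : (0:ℝ) ≤ w := by positivity
  have hbnn : ∀ k : Fin (d+2), ∀ j, 0 ≤ A (Sum.inl k) j := by
    intro k j; rcases hbinary k j with h|h <;> simp [h]
  have hble : ∀ k : Fin (d+2), ∀ j, A (Sum.inl k) j ≤ 1 := by
    intro k j; rcases hbinary k j with h|h <;> simp [h]
  constructor
  · intro i j
    cases i with
    | inl k =>
      rcases hbinary k.castSucc j with h1 | h1 <;>
        rcases hbinary (Fin.last (d+1)) j with h2 | h2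
      · exact ⟨0, by omega, by rw [hA', h1, h2]; norm_num⟩
      · exact ⟨1, by omega, by rw [hA', h1, h2]; norm_num⟩
      · exact ⟨w*d+1, by omega, by rw [hA', h1, h2]; push_cast; ring⟩
      · exfalso
        rcases hdisjoint k.castSucc (Fin.last (d+1)) (Fin.castSucc_lt_last k).ne j with h|h
        · rw [h1] at h; norm_num at h
        · rw [h2] at h; norm_num at h
    | inr i =>
      obtain ⟨a, ha, ha'⟩ := hAq (Sum.inr i) j
      exact ⟨a, ha, by rw [hA'']; exact ha'⟩
  · intro S hS k hk
    obtain ⟨i, hi⟩ := hdisj S hS k hk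
    cases i with
    | inr i => exact ⟨Sum.inr i, by simpa only [hA''] using hi⟩
    | inl m =>
      have hsumnn : 0 ≤ ∑ j ∈ S, A (Sum.inl m) j :=
        Finset.sum_nonneg fun j _ => hbnn m j
      have hmk : A (Sum.inl m) k = 1 := by
        rcases hbinary m k with h|h
        · exfalso; rw [h] at hi; nlinarith
        · exact h
      have hS0 : ∀ j ∈ S, A (Sum.inl m) j = 0 := by
        intro j hj
        rcases hbinary m j with h|h
        · exact h
        · exfalso
          have h1 : (1:ℝ) ≤ ∑ j ∈ S, A (Sum.inl m) j := by
            calc (1:ℝ) = A (Sum.inl m) j := h.symm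
            _ ≤ _ := Finset.single_le_sum (fun j _ => hbnn m j) hj
          rw [hmk] at hi
          nlinarith
      by_cases hm : m = Fin.last (d+1)
      · subst hm
        have colbound : ∀ j, ∑ ℓ : Fin (d+1), A (Sum.inl ℓ.castSucc) j ≤ 1 := by
          intro j
          by_cases hz : ∀ ℓ : Fin (d+1), A (Sum.inl ℓ.castSucc) j = 0
          · simp [hz]
          · push_neg at hz
            obtain ⟨ℓ0, hℓ0⟩ := hz
            have h1 : A (Sum.inl ℓ0.castSucc) j = 1 := (hbinary _ j).resolve_left hℓ0
            have heq : ∑ ℓ : Fin (d+1), A (Sum.inl ℓ.castSucc) j = 1 := by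
              rw [Finset.sum_eq_single ℓ0]
              · exact h1
              · intro ℓ _ hne
                refine (hdisjoint ℓ.castSucc ℓ0.castSucc ?_ j).resolve_right ?_
                · simpa [Fin.castSucc_inj] using hne
                · rw [h1]; norm_num
              · simp
            linarith
        have key : ∃ ℓ : Fin (d+1), ∑ j ∈ S, A (Sum.inl ℓ.castSucc) j = 0 := by
          by_contra hcon
          push_neg at hcon
          have hge : ∀ ℓ : Fin (d+1), (1:ℝ) ≤ ∑ j ∈ S, A (Sum.inl ℓ.castSucc) j := by
            intro ℓ
            by_contra hlt
            push_neg at hlt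
            apply hcon ℓ
            refine Finset.sum_eq_zero (fun j hj => ?_)
            rcases hbinary ℓ.castSucc j with h|h
            · exact h
            · exfalso
              have := Finset.single_le_sum (fun j _ => hbnn ℓ.castSucc j) hj
              rw [h] at this; linarith
          have htot : ((d:ℝ)+1) ≤ ∑ ℓ : Fin (d+1), ∑ j ∈ S, A (Sum.inl ℓ.castSucc) j := by
            calc ((d:ℝ)+1) = ∑ _ℓ : Fin (d+1), (1:ℝ) := by simp
            _ ≤ _ := Finset.sum_le_sum fun ℓ _ => hge ℓ
          have htot2 : ∑ ℓ : Fin (d+1), ∑ j ∈ S, A (Sum.inl ℓ.castSucc) j ≤ (d:ℝ) := by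
            rw [Finset.sum_comm]
            calc ∑ j ∈ S, ∑ ℓ : Fin (d+1), A (Sum.inl ℓ.castSucc) j
                ≤ ∑ _j ∈ S, (1:ℝ) := Finset.sum_le_sum (fun j _ => colbound j)
            _ = S.card := by simp
            _ ≤ d := by exact_mod_cast hS
          linarith
        obtain ⟨ℓ, hℓ⟩ := key
        refine ⟨Sum.inl ℓ, ?_⟩
        have hsum' : ∑ j ∈ S, A' (Sum.inl ℓ) j = 0 := by
          rw [Finset.sum_congr rfl (fun j _ => hA' ℓ j), Finset.sum_add_distrib,
            ← Finset.mul_sum, hℓ, Finset.sum_eq_zero hS0]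
          ring
        rw [hsum', mul_zero, hA', hmk]
        have h0 := hbnn ℓ.castSucc k
        nlinarith [mul_nonneg (by positivity : (0:ℝ) ≤ (w:ℝ)*(d:ℝ)+1) h0]
      · have hmv : m.val < d + 1 := by
          have h2 := m.isLt
          have h3 : m.val ≠ d + 1 := fun h => hm (Fin.ext h)
          omega
        refine ⟨Sum.inl ⟨m.val, hmv⟩, ?_⟩
        have hcs : (⟨m.val, hmv⟩ : Fin (d+1)).castSucc = m := by
          apply Fin.ext; rfl
        have hsum' : ∑ j ∈ S, A' (Sum.inl ⟨m.val, hmv⟩) j ≤ (d:ℝ) := by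
          rw [Finset.sum_congr rfl (fun j _ => hA' _ j), Finset.sum_add_distrib,
            ← Finset.mul_sum, hcs, Finset.sum_eq_zero hS0, mul_zero, zero_add]
          calc ∑ j ∈ S, A (Sum.inl (Fin.last (d+1))) j ≤ ∑ _j ∈ S, (1:ℝ) :=
            Finset.sum_le_sum (fun j _ => hble _ j)
          _ = S.card := by simp
          _ ≤ d := by exact_mod_cast hS
        have hval : (w:ℝ)*d + 1 ≤ A' (Sum.inl ⟨m.val, hmv⟩) k := by
          rw [hA', hcs, hmk]
          have := hbnn (Fin.last (d+1)) k
          linarith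
        show w * ∑ j ∈ S, A' (Sum.inl ⟨m.val, hmv⟩) j < A' (Sum.inl ⟨m.val, hmv⟩) k
        calc (w:ℝ) * ∑ j ∈ S, A' (Sum.inl ⟨m.val, hmv⟩) j ≤ w * d :=
          mul_le_mul_of_nonneg_left hsum' hwnn
        _ < (w:ℝ)*d + 1 := by linarith
        _ ≤ _ := hval
end

section
/- Let A be a t×n real matrix with nonnegative entries such that every d-sparse vector y ∈ {0, c_1, ..., c_m}ⁿ (with 0 < c_1 < ... < c_m) is uniquely determined by Ay. Let B be a binary d-disjunct matrix of size t'×n'. Then the Kronecker product B⊗A (of size tt' × nn') uniquely determines every d-sparse vector x ∈ {0, c_1, ..., c_m}^{nn'}: if x, x' ∈ {0,c_1,...,c_m}^{nn'} are d-sparse and (B⊗A)x = (B⊗A)x', then x = x'. -/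
open Kronecker

/-- Classical binary `d`-disjunctness. -/
def BinDisjunct {t n : ℕ} (M : Matrix (Fin t) (Fin n) ℝ) (d : ℕ) : Prop :=
  ∀ S : Finset (Fin n), S.card ≤ d → ∀ k ∉ S,
    ∃ i, M i k = 1 ∧ ∀ j ∈ S, M i j = 0

lemma kron_row {t n t' n' : ℕ} (A : Matrix (Fin t) (Fin n) ℝ)
    (B : Matrix (Fin t') (Fin n') ℝ) (z : Fin n' × Fin n → ℝ)
    (i₁ : Fin t') (i : Fin t) :
    ((B ⊗ₖ A).mulVec z) (i₁, i)
      = ∑ j' : Fin n', B i₁ j' * (A.mulVec fun j => z (j', j)) i := by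
  simp only [Matrix.mulVec, dotProduct, Matrix.kroneckerMap_apply,
    Fintype.sum_prod_type, Finset.mul_sum]
  exact Finset.sum_congr rfl fun j' _ => Finset.sum_congr rfl fun j _ => by ring

lemma kron_aux {t n t' n' d : ℕ} (A : Matrix (Fin t) (Fin n) ℝ)
    (hA0 : ∀ i j, 0 ≤ A i j)
    (B : Matrix (Fin t') (Fin n') ℝ)
    (hBbin : ∀ i j, B i j = 0 ∨ B i j = 1)
    (hBdisj : BinDisjunct B d)
    (x x' : Fin n' × Fin n → ℝ) (hx'0 : ∀ p, 0 ≤ x' p)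
    (S : Finset (Fin n' × Fin n)) (hScard : S.card ≤ d) (hS : ∀ p ∉ S, x p = 0)
    (h : (B ⊗ₖ A).mulVec x = (B ⊗ₖ A).mulVec x')
    (k : Fin n') (i : Fin t) :
    (A.mulVec fun j => x' (k, j)) i ≤ (A.mulVec fun j => x (k, j)) i := by
  set T : Finset (Fin n') := (S.image Prod.fst).erase k with hT
  have hTcard : T.card ≤ d :=
    le_trans (le_trans (Finset.card_erase_le) Finset.card_image_le) hScard
  obtain ⟨i₁, hBk, hBT⟩ := hBdisj T hTcard k (Finset.notMem_erase k _)
  have hB0 : ∀ j, 0 ≤ B i₁ j := by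
    intro j; rcases hBbin i₁ j with h' | h' <;> simp [h']
  have hx_eq : ((B ⊗ₖ A).mulVec x) (i₁, i) = (A.mulVec fun j => x (k, j)) i := by
    rw [kron_row]
    rw [Finset.sum_eq_single k]
    · rw [hBk, one_mul]
    · intro j' _ hne
      by_cases hmem : j' ∈ S.image Prod.fst
      · rw [hBT j' (Finset.mem_erase.mpr ⟨hne, hmem⟩), zero_mul]
      · have : (A.mulVec fun j => x (j', j)) i = 0 := by
          simp only [Matrix.mulVec, dotProduct]
          apply Finset.sum_eq_zero
          intro j _
          have : x (j', j) = 0 := by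
            apply hS
            intro hc
            exact hmem (Finset.mem_image.mpr ⟨(j', j), hc, rfl⟩)
          rw [this, mul_zero]
        rw [this, mul_zero]
    · intro h'; exact absurd (Finset.mem_univ k) h'
  have hmv0 : ∀ j' : Fin n', 0 ≤ (A.mulVec fun j => x' (j', j)) i := by
    intro j'
    simp only [Matrix.mulVec, dotProduct]
    apply Finset.sum_nonneg
    intro j _
    exact mul_nonneg (hA0 i j) (hx'0 (j', j))
  have hle : (A.mulVec fun j => x' (k, j)) i ≤ ((B ⊗ₖ A).mulVec x') (i₁, i) := by
    rw [kron_row]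
    calc (A.mulVec fun j => x' (k, j)) i
        = B i₁ k * (A.mulVec fun j => x' (k, j)) i := by rw [hBk, one_mul]
      _ ≤ _ := Finset.single_le_sum
          (f := fun j' => B i₁ j' * (A.mulVec fun j => x' (j', j)) i)
          (fun j' _ => mul_nonneg (hB0 j') (hmv0 j')) (Finset.mem_univ k)
  calc (A.mulVec fun j => x' (k, j)) i ≤ ((B ⊗ₖ A).mulVec x') (i₁, i) := hle
    _ = ((B ⊗ₖ A).mulVec x) (i₁, i) := by rw [h]
    _ = (A.mulVec fun j => x (k, j)) i := hx_eq

/-- Theorem `DA`: the Kronecker product `B ⊗ₖ A` of a binary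
`d`-disjunct matrix `B` with a matrix `A` identifying `d`-sparse vectors over
`{0, c_1, …, c_m}` identifies `d`-sparse vectors over the same alphabet. -/
theorem kronecker_identification (t n t' n' m d : ℕ)
    (A : Matrix (Fin t) (Fin n) ℝ) (hA0 : ∀ i j, 0 ≤ A i j)
    (c : Fin m → ℝ) (hcpos : ∀ i, 0 < c i) (hcmono : StrictMono c)
    (hAid : ∀ y y' : Fin n → ℝ,
      (∀ j, y j ∈ insert (0 : ℝ) (Set.range c)) →
      (∀ j, y' j ∈ insert (0 : ℝ) (Set.range c)) →
      (∃ S : Finset (Fin n), S.card ≤ d ∧ ∀ j ∉ S, y j = 0) →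
      (∃ S : Finset (Fin n), S.card ≤ d ∧ ∀ j ∉ S, y' j = 0) →
      A.mulVec y = A.mulVec y' → y = y')
    (B : Matrix (Fin t') (Fin n') ℝ)
    (hBbin : ∀ i j, B i j = 0 ∨ B i j = 1)
    (hBdisj : BinDisjunct B d)
    (x x' : Fin n' × Fin n → ℝ)
    (halpha : ∀ p, x p ∈ insert (0 : ℝ) (Set.range c))
    (halpha' : ∀ p, x' p ∈ insert (0 : ℝ) (Set.range c))
    (hsparse : ∃ S : Finset (Fin n' × Fin n), S.card ≤ d ∧ ∀ p ∉ S, x p = 0)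
    (hsparse' : ∃ S : Finset (Fin n' × Fin n), S.card ≤ d ∧ ∀ p ∉ S, x' p = 0)
    (houtcome : (B ⊗ₖ A).mulVec x = (B ⊗ₖ A).mulVec x') :
    x = x' := by
  obtain ⟨S, hScard, hS⟩ := hsparse
  obtain ⟨S', hScard', hS'⟩ := hsparse'
  have nonneg : ∀ (z : Fin n' × Fin n → ℝ),
      (∀ p, z p ∈ insert (0 : ℝ) (Set.range c)) → ∀ p, 0 ≤ z p := by
    intro z hz p
    rcases hz p with h' | ⟨i, hi⟩
    · rw [h']
    · rw [← hi]; exact (hcpos i).le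
  have sparse_block : ∀ (z : Fin n' × Fin n → ℝ) (W : Finset (Fin n' × Fin n)),
      W.card ≤ d → (∀ p ∉ W, z p = 0) → ∀ k : Fin n',
      ∃ U : Finset (Fin n), U.card ≤ d ∧ ∀ j ∉ U, z (k, j) = 0 := by
    intro z W hWcard hW k
    refine ⟨(W.filter fun p => p.1 = k).image Prod.snd,
      le_trans (le_trans Finset.card_image_le (Finset.card_filter_le _ _)) hWcard, ?_⟩
    intro j hj
    apply hW
    intro hc
    exact hj (Finset.mem_image.mpr ⟨(k, j), Finset.mem_filter.mpr ⟨hc, rfl⟩, rfl⟩)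
  have main : ∀ k : Fin n', (fun j => x (k, j)) = fun j => x' (k, j) := by
    intro k
    apply hAid
    · intro j; exact halpha (k, j)
    · intro j; exact halpha' (k, j)
    · exact sparse_block x S hScard hS k
    · exact sparse_block x' S' hScard' hS' k
    · funext i
      exact le_antisymm
        (kron_aux A hA0 B hBbin hBdisj x' x (nonneg x halpha) S' hScard' hS'
          houtcome.symm k i)
        (kron_aux A hA0 B hBbin hBdisj x x' (nonneg x' halpha') S hScard hS
          houtcome k i)
  funext p
  obtain ⟨k, j⟩ := p
  exact congrFun (main k) j
end

section
/- Let A be a binary d-disjunct matrix of size t×n, let c_1 < ... < c_m be positive integers with c_i ∈ ℤ_{>0}, let u = c_m·d, and let n' ≥ 1. Define C = (A_1 A_2 ⋯ A_{n'}) where A_j = ((u^j − 1)/(u − 1))·A, i.e., A_j = (1 + u + ... + u^{j−1})·A. Then C uniquely determines every d-sparse vector x ∈ {0, c_1, ..., c_m}^{nn'} from Cx: if x, x' are d-sparse with entries in {0,c_1,...,c_m} and Cx = Cx', then x = x'. -/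
/-- One-sided identification from disjunctness. -/
lemma disj_le {t n d : ℕ} {A : Matrix (Fin t) (Fin n) ℝ}
    (hAbin : ∀ i j, A i j = 0 ∨ A i j = 1) (hAdisj : BinDisjunct A d)
    (y y' : Fin n → ℝ) (hy : ∀ a, 0 ≤ y a)
    (T' : Finset (Fin n)) (hT' : T'.card ≤ d)
    (h0' : ∀ a ∉ T', y' a = 0)
    (h : A.mulVec y = A.mulVec y') (k : Fin n) : y k ≤ y' k := by
  obtain ⟨i, hik, hiS⟩ := hAdisj (T'.erase k)
    (le_trans (Finset.card_erase_le) hT') k (Finset.notMem_erase k T')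
  have h1 : y k ≤ A.mulVec y i := by
    have hterm : ∀ j ∈ Finset.univ, 0 ≤ A i j * y j := by
      intro j _
      rcases hAbin i j with h'|h'
      · rw [h', zero_mul]
      · rw [h', one_mul]; exact hy j
    have := Finset.single_le_sum hterm (Finset.mem_univ k)
    rw [hik, one_mul] at this
    simpa [Matrix.mulVec, dotProduct] using this
  have h2 : A.mulVec y' i = y' k := by
    simp only [Matrix.mulVec, dotProduct]
    rw [Finset.sum_eq_single k]
    · rw [hik, one_mul]
    · intro j _ hj
      by_cases hjT : j ∈ T'
      · rw [hiS j (Finset.mem_erase.mpr ⟨hj, hjT⟩), zero_mul]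
      · rw [h0' j hjT, mul_zero]
    · intro hk; exact absurd (Finset.mem_univ k) hk
  calc y k ≤ A.mulVec y i := h1
    _ = A.mulVec y' i := by rw [h]
    _ = y' k := h2

lemma disj_unique {t n d : ℕ} {A : Matrix (Fin t) (Fin n) ℝ}
    (hAbin : ∀ i j, A i j = 0 ∨ A i j = 1) (hAdisj : BinDisjunct A d)
    (y y' : Fin n → ℝ) (hy : ∀ a, 0 ≤ y a) (hy' : ∀ a, 0 ≤ y' a)
    (T T' : Finset (Fin n)) (hT : T.card ≤ d) (hT' : T'.card ≤ d)
    (h0 : ∀ a ∉ T, y a = 0) (h0' : ∀ a ∉ T', y' a = 0)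
    (h : A.mulVec y = A.mulVec y') : y = y' := by
  funext k
  exact le_antisymm (disj_le hAbin hAdisj y y' hy T' hT' h0' h k)
    (disj_le hAbin hAdisj y' y hy' T hT h0 h.symm k)

/-- Core digit-style uniqueness argument for one column. -/
lemma aux_col {N u : ℕ} (hu : 1 ≤ u) (v v' : Fin N → ℝ)
    (hv : ∀ j, 0 ≤ v j) (hv' : ∀ j, 0 ≤ v' j)
    (hsum' : ∑ j, v' j ≤ (u : ℝ))
    (heq : ∑ j, (∑ i' ∈ Finset.range (j.1 + 1), (u : ℝ) ^ i') * v j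
         = ∑ j, (∑ i' ∈ Finset.range (j.1 + 1), (u : ℝ) ^ i') * v' j)
    (j0 : Fin N) (hone : 1 ≤ v j0 - v' j0)
    (hhigh : ∀ j, j0 < j → v j = v' j) : False := by
  set W : ℕ → ℝ := fun j => ∑ i' ∈ Finset.range (j+1), (u:ℝ)^i' with hWdef
  have hW1 : ∀ j, 1 ≤ W j := by
    intro j
    have := Finset.single_le_sum (f := fun i => (u:ℝ)^i)
      (fun i _ => by positivity) (Finset.mem_range.mpr (Nat.succ_pos j))
    simpa [hWdef] using this
  have hWnn : ∀ j, 0 ≤ W j := fun j => le_trans zero_le_one (hW1 j)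
  have hWstep : ∀ j, W (j+1) = (u:ℝ) * W j + 1 := by
    intro j
    simp only [hWdef]
    exact geom_sum_succ
  have hWmono : ∀ a b : ℕ, a ≤ b → W a ≤ W b := by
    intro a b hab
    apply Finset.sum_le_sum_of_subset_of_nonneg
    · exact Finset.range_subset_range.mpr (by omega)
    · intro i _ _; positivity
  have hdiff : W j0.1 * (v j0 - v' j0)
      = ∑ j ∈ Finset.univ.erase j0, W j.1 * (v' j - v j) := by
    have h0 : ∑ j : Fin N, W j.1 * (v j - v' j) = 0 := by
      have : ∑ j : Fin N, W j.1 * v j - ∑ j : Fin N, W j.1 * v' j = 0 := by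
        rw [heq]; ring
      rw [← Finset.sum_sub_distrib] at this
      simpa [mul_sub] using this
    rw [← Finset.add_sum_erase _ _ (Finset.mem_univ j0)] at h0
    have hneg : ∑ j ∈ Finset.univ.erase j0, W j.1 * (v' j - v j)
        = - ∑ j ∈ Finset.univ.erase j0, W j.1 * (v j - v' j) := by
      rw [← Finset.sum_neg_distrib]
      exact Finset.sum_congr rfl (fun j _ => by ring)
    rw [hneg]; linarith
  have hbound : ∀ j ∈ Finset.univ.erase j0,
      (u:ℝ) * (W j.1 * (v' j - v j)) ≤ (W j0.1 - 1) * v' j := by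
    intro j hj
    have hjne : j ≠ j0 := Finset.ne_of_mem_erase hj
    rcases lt_or_ge j.1 j0.1 with hlt | hge
    · have h1 : (u:ℝ) * W j.1 + 1 ≤ W j0.1 := by
        rw [← hWstep]; exact hWmono _ _ (by omega)
      have h2 : W j.1 * (v' j - v j) ≤ W j.1 * v' j := by
        have := mul_nonneg (hWnn j.1) (hv j)
        nlinarith [hWnn j.1, hv j]
      calc (u:ℝ) * (W j.1 * (v' j - v j)) ≤ (u:ℝ) * (W j.1 * v' j) := by
            apply mul_le_mul_of_nonneg_left h2 (by positivity)
        _ = ((u:ℝ) * W j.1) * v' j := by ring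
        _ ≤ (W j0.1 - 1) * v' j :=
            mul_le_mul_of_nonneg_right (by linarith) (hv' j)
    · have hj0j : j0 < j := by
        rcases lt_or_eq_of_le (Fin.le_def.mpr hge) with h' | h'
        · exact h'
        · exact absurd h'.symm hjne
      rw [hhigh j hj0j]
      have : (u:ℝ) * (W j.1 * (v' j - v' j)) = 0 := by ring
      rw [this]
      exact mul_nonneg (by linarith [hW1 j0.1]) (hv' j)
  have hsumerase : ∑ j ∈ Finset.univ.erase j0, v' j ≤ (u:ℝ) := by
    refine le_trans ?_ hsum'
    apply Finset.sum_le_sum_of_subset_of_nonneg (Finset.erase_subset _ _)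
    intro i _ _; exact hv' i
  have hchain : (u:ℝ) * W j0.1 ≤ (W j0.1 - 1) * (u:ℝ) := by
    calc (u:ℝ) * W j0.1 = (u:ℝ) * (W j0.1 * 1) := by ring
      _ ≤ (u:ℝ) * (W j0.1 * (v j0 - v' j0)) := by
          apply mul_le_mul_of_nonneg_left _ (by positivity)
          exact mul_le_mul_of_nonneg_left hone (hWnn j0.1)
      _ = (u:ℝ) * ∑ j ∈ Finset.univ.erase j0, W j.1 * (v' j - v j) := by rw [hdiff]
      _ = ∑ j ∈ Finset.univ.erase j0, (u:ℝ) * (W j.1 * (v' j - v j)) :=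
          Finset.mul_sum _ _ _
      _ ≤ ∑ j ∈ Finset.univ.erase j0, (W j0.1 - 1) * v' j := Finset.sum_le_sum hbound
      _ = (W j0.1 - 1) * ∑ j ∈ Finset.univ.erase j0, v' j := (Finset.mul_sum _ _ _).symm
      _ ≤ (W j0.1 - 1) * (u:ℝ) :=
          mul_le_mul_of_nonneg_left hsumerase (by linarith [hW1 j0.1])
  have hu' : (1:ℝ) ≤ (u:ℝ) := by exact_mod_cast hu
  nlinarith [hchain]

lemma col_unique {N u : ℕ} (hu : 1 ≤ u) (v v' : Fin N → ℝ)
    (hv : ∀ j, 0 ≤ v j) (hv' : ∀ j, 0 ≤ v' j)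
    (hint : ∀ j, v j ≠ v' j → 1 ≤ |v j - v' j|)
    (hsum : ∑ j, v j ≤ (u : ℝ)) (hsum' : ∑ j, v' j ≤ (u : ℝ))
    (heq : ∑ j, (∑ i' ∈ Finset.range (j.1 + 1), (u : ℝ) ^ i') * v j
         = ∑ j, (∑ i' ∈ Finset.range (j.1 + 1), (u : ℝ) ^ i') * v' j) :
    ∀ j, v j = v' j := by
  by_contra h
  push_neg at h
  set D : Finset (Fin N) := Finset.univ.filter (fun j => v j ≠ v' j) with hD
  have hDne : D.Nonempty := by
    obtain ⟨j, hj⟩ := h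
    exact ⟨j, Finset.mem_filter.mpr ⟨Finset.mem_univ j, hj⟩⟩
  set j0 := D.max' hDne with hj0def
  have hj0 : v j0 ≠ v' j0 := (Finset.mem_filter.mp (D.max'_mem hDne)).2
  have hhigh : ∀ j, j0 < j → v j = v' j := by
    intro j hj
    by_contra hne
    exact absurd (D.le_max' j (Finset.mem_filter.mpr ⟨Finset.mem_univ j, hne⟩))
      (not_le.mpr hj)
  rcases lt_or_gt_of_ne hj0 with hlt | hgt
  · have h1 := hint j0 hj0
    rw [abs_of_neg (by linarith)] at h1
    exact aux_col hu v' v hv' hv hsum heq.symm j0 (by linarith)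
      (fun j hj => (hhigh j hj).symm)
  · have h1 := hint j0 hj0
    rw [abs_of_pos (by linarith)] at h1
    exact aux_col hu v v' hv hv' hsum' heq j0 h1 hhigh

/-- the concatenation `C = (A₁ A₂ ⋯ A_{n'})` with
`A_j = (1 + u + ⋯ + u^{j-1})·A` and `u = c_m·d` identifies every `d`-sparse
vector over `{0, c_1, …, c_m}` (positive integers `c_i`).  Block `j : Fin n'`
of `C` carries the coefficient `∑_{i' ≤ j} u^{i'} = (u^{j+1}-1)/(u-1)`. -/
theorem concatenation_identification (t n n' m d : ℕ) (hn' : 1 ≤ n') (hm : 1 ≤ m)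
    (A : Matrix (Fin t) (Fin n) ℝ)
    (hAbin : ∀ i j, A i j = 0 ∨ A i j = 1)
    (hAdisj : BinDisjunct A d)
    (c : Fin (m + 1) → ℕ) (hc0 : c 0 = 0) (hcmono : StrictMono c)
    (u : ℕ) (hu : u = c (Fin.last m) * d)
    (C : Matrix (Fin t) (Fin n' × Fin n) ℝ)
    (hC : ∀ i, ∀ j : Fin n', ∀ a : Fin n,
      C i (j, a) = (∑ i' ∈ Finset.range (j.1 + 1), (u : ℝ) ^ i') * A i a)
    (x x' : Fin n' × Fin n → ℝ)
    (halpha : ∀ p, ∃ i : Fin (m + 1), x p = (c i : ℝ))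
    (halpha' : ∀ p, ∃ i : Fin (m + 1), x' p = (c i : ℝ))
    (hsparse : ∃ S : Finset (Fin n' × Fin n), S.card ≤ d ∧ ∀ p ∉ S, x p = 0)
    (hsparse' : ∃ S : Finset (Fin n' × Fin n), S.card ≤ d ∧ ∀ p ∉ S, x' p = 0)
    (houtcome : C.mulVec x = C.mulVec x') :
    x = x' := by
  obtain ⟨S, hScard, hS0⟩ := hsparse
  obtain ⟨S', hScard', hS0'⟩ := hsparse'
  by_cases hd : d = 0
  · subst hd
    have hSe : S = ∅ := Finset.card_eq_zero.mp (le_antisymm hScard (Nat.zero_le _))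
    have hSe' : S' = ∅ := Finset.card_eq_zero.mp (le_antisymm hScard' (Nat.zero_le _))
    funext p
    rw [hS0 p (by simp [hSe]), hS0' p (by simp [hSe'])]
  · have hd1 : 1 ≤ d := Nat.one_le_iff_ne_zero.mpr hd
    have hcm : 1 ≤ c (Fin.last m) := by
      have h0lt : (0 : Fin (m+1)) < Fin.last m := by
        rw [Fin.lt_iff_val_lt_val]
        simp [Fin.last]
        omega
      have := hcmono h0lt
      omega
    have hu1 : 1 ≤ u := by
      rw [hu]; exact Nat.one_le_iff_ne_zero.mpr (Nat.mul_ne_zero (by omega) hd)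
    -- value facts
    have hx0 : ∀ p, 0 ≤ x p := by
      intro p; obtain ⟨i, hi⟩ := halpha p; rw [hi]; positivity
    have hx0' : ∀ p, 0 ≤ x' p := by
      intro p; obtain ⟨i, hi⟩ := halpha' p; rw [hi]; positivity
    have hxle : ∀ p, x p ≤ (c (Fin.last m) : ℝ) := by
      intro p; obtain ⟨i, hi⟩ := halpha p; rw [hi]
      exact_mod_cast hcmono.monotone (Fin.le_last i)
    have hxle' : ∀ p, x' p ≤ (c (Fin.last m) : ℝ) := by
      intro p; obtain ⟨i, hi⟩ := halpha' p; rw [hi]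
      exact_mod_cast hcmono.monotone (Fin.le_last i)
    have hint : ∀ p, x p ≠ x' p → 1 ≤ |x p - x' p| := by
      intro p hne
      obtain ⟨i, hi⟩ := halpha p
      obtain ⟨i', hi'⟩ := halpha' p
      rw [hi, hi'] at hne ⊢
      have hne' : c i ≠ c i' := by
        intro hcc; exact hne (by rw [hcc])
      have h1 : (1:ℤ) ≤ |(c i : ℤ) - (c i' : ℤ)| := by
        apply Int.one_le_abs
        omega
      have h2 : ((1:ℤ):ℝ) ≤ ((|(c i : ℤ) - (c i' : ℤ)| : ℤ) : ℝ) := Int.cast_le.mpr h1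
      rw [Int.cast_abs] at h2
      push_cast at h2 ⊢
      exact h2
    -- aggregated vector
    set W : ℕ → ℝ := fun j => ∑ i' ∈ Finset.range (j+1), (u:ℝ)^i' with hWdef
    have hWnn : ∀ j, 0 ≤ W j := by
      intro j; apply Finset.sum_nonneg; intro i _; positivity
    set y : Fin n → ℝ := fun a => ∑ j : Fin n', W j.1 * x (j, a) with hydef
    set y' : Fin n → ℝ := fun a => ∑ j : Fin n', W j.1 * x' (j, a) with hy'def
    have hynn : ∀ a, 0 ≤ y a := by
      intro a; apply Finset.sum_nonneg; intro j _
      exact mul_nonneg (hWnn j.1) (hx0 _)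
    have hy'nn : ∀ a, 0 ≤ y' a := by
      intro a; apply Finset.sum_nonneg; intro j _
      exact mul_nonneg (hWnn j.1) (hx0' _)
    have hT0 : ∀ a ∉ S.image Prod.snd, y a = 0 := by
      intro a ha
      apply Finset.sum_eq_zero
      intro j _
      have hmem : (j, a) ∉ S := fun hmem => ha (Finset.mem_image.mpr ⟨(j,a), hmem, rfl⟩)
      rw [hS0 _ hmem, mul_zero]
    have hT0' : ∀ a ∉ S'.image Prod.snd, y' a = 0 := by
      intro a ha
      apply Finset.sum_eq_zero
      intro j _
      have hmem : (j, a) ∉ S' := fun hmem => ha (Finset.mem_image.mpr ⟨(j,a), hmem, rfl⟩)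
      rw [hS0' _ hmem, mul_zero]
    have hAy : ∀ (z : Fin n' × Fin n → ℝ),
        A.mulVec (fun a => ∑ j : Fin n', W j.1 * z (j, a)) = C.mulVec z := by
      intro z
      funext i
      simp only [Matrix.mulVec, dotProduct]
      rw [Fintype.sum_prod_type, Finset.sum_comm]
      apply Finset.sum_congr rfl
      intro a _
      rw [Finset.mul_sum]
      apply Finset.sum_congr rfl
      intro j _
      rw [hC, hWdef]
      ring
    have hyy' : y = y' := by
      apply disj_unique hAbin hAdisj y y' hynn hy'nn (S.image Prod.snd) (S'.image Prod.snd)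
        (le_trans Finset.card_image_le hScard) (le_trans Finset.card_image_le hScard')
        hT0 hT0'
      rw [hydef, hy'def, hAy x, hAy x', houtcome]
    -- column sum bounds
    have hsumcol : ∀ (z : Fin n' × Fin n → ℝ) (Sz : Finset (Fin n' × Fin n)),
        Sz.card ≤ d → (∀ p ∉ Sz, z p = 0) → (∀ p, z p ≤ (c (Fin.last m) : ℝ)) →
        (∀ p, 0 ≤ z p) → ∀ a, ∑ j : Fin n', z (j, a) ≤ (u : ℝ) := by
      intro z Sz hcard h0 hle h0' a
      have hfil : ∑ j ∈ Finset.univ.filter (fun j : Fin n' => (j, a) ∈ Sz), z (j, a)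
          = ∑ j : Fin n', z (j, a) := by
        apply Finset.sum_filter_of_ne
        intro j _ hne
        by_contra hmem
        exact hne (h0 _ hmem)
      rw [← hfil]
      have hFcard : (Finset.univ.filter (fun j : Fin n' => (j, a) ∈ Sz)).card ≤ d := by
        refine le_trans (Finset.card_le_card_of_injOn (fun j => (j, a)) ?_ ?_) hcard
        · intro j hj; exact (Finset.mem_filter.mp hj).2
        · intro j1 _ j2 _ hj; exact (Prod.mk.injEq _ _ _ _ ▸ hj).1
      calc ∑ j ∈ Finset.univ.filter (fun j : Fin n' => (j, a) ∈ Sz), z (j, a)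
          ≤ ∑ _j ∈ Finset.univ.filter (fun j : Fin n' => (j, a) ∈ Sz),
              (c (Fin.last m) : ℝ) := Finset.sum_le_sum (fun j _ => hle _)
        _ = ((Finset.univ.filter (fun j : Fin n' => (j, a) ∈ Sz)).card : ℝ)
              * (c (Fin.last m) : ℝ) := by rw [Finset.sum_const, nsmul_eq_mul]
        _ ≤ (d : ℝ) * (c (Fin.last m) : ℝ) := by
            apply mul_le_mul_of_nonneg_right _ (by positivity)
            exact_mod_cast hFcard
        _ = (u : ℝ) := by rw [hu]; push_cast; ring
    funext p
    obtain ⟨j, a⟩ := p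
    have hcol := congrFun hyy' a
    simp only [hydef, hy'def, hWdef] at hcol
    exact col_unique hu1 (fun j => x (j, a)) (fun j => x' (j, a))
      (fun j => hx0 _) (fun j => hx0' _) (fun j hne => hint _ hne)
      (hsumcol x S hScard hS0 hxle hx0 a)
      (hsumcol x' S' hScard' hS0' hxle' hx0' a)
      hcol j
end
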